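/- arXiv:1503.04291 — 4 statements merged into one kernel-verified Lean document; each statement's English description precedes it below -/
import Mathlib

section
/- Let a < b, let 1 ≤ p ≤ ∞, and let φ be a nonnegative continuous function on [a,b] with ∫_a^b φ(x) dx = 1. There exists a constant C, depending only on a, b and p, such that for every function f on [a,b] which is differentiable with derivative f′, and with f, f′ ∈ L^p[a,b], one has ‖f − ∫_a^b f(x)φ(x) dx‖_{L^p[a,b]} ≤ C ‖f′‖_{L^p[a,b]} (the subtracted quantity being the constant function with that value). -/
/-!
Fix `x` and write `f x - ∫ f φ = ∫ (f x - f t) φ t dt`, using `∫ φ = 1`. By the fundamental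
theorem of calculus `|f x - f t| ≤ ‖f'‖_{L¹}`, and `φ ≥ 0` turns this into
`|f x - ∫ f φ| ≤ ‖f'‖_{L¹}` for every `x`. Taking the `Lᵖ` norm of this constant bound and
applying Hölder's inequality `‖f'‖_{L¹} ≤ (b - a)^{1 - 1/p} ‖f'‖_{Lᵖ}` gives the inequality
with `C = b - a`.
-/

open MeasureTheory ENNReal Set
namespace Paper

theorem norm_sub_le_setIntegral_norm_deriv {E : Type*} [NormedAddCommGroup E]
    [NormedSpace ℝ E] [CompleteSpace E] {f f' : ℝ → E} {a b : ℝ}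
    (hderiv : ∀ x ∈ Icc a b, HasDerivWithinAt f (f' x) (Icc a b) x)
    (hint : IntegrableOn f' (Icc a b)) {x t : ℝ} (hx : x ∈ Icc a b) (ht : t ∈ Icc a b) :
    ‖f x - f t‖ ≤ ∫ s in Icc a b, ‖f' s‖ := by
  wlog htx : t ≤ x generalizing x t
  · rw [norm_sub_rev]
    exact this ht hx (le_of_not_ge htx)
  have hsub : Icc t x ⊆ Icc a b := Icc_subset_Icc ht.1 hx.2
  have hftc : ∫ s in t..x, f' s = f x - f t := by
    refine intervalIntegral.integral_eq_sub_of_hasDeriv_right_of_le htx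
      (fun s hs => (hderiv s (hsub hs)).continuousWithinAt.mono hsub) (fun s hs => ?_)
      ((hint.mono_set (uIcc_of_le htx ▸ hsub)).intervalIntegrable)
    have hs' : s ∈ Ioo a b := ⟨ht.1.trans_lt hs.1, hs.2.trans_le hx.2⟩
    exact ((hderiv s (Ioo_subset_Icc_self hs')).hasDerivAt
      (Icc_mem_nhds hs'.1 hs'.2)).hasDerivWithinAt
  calc ‖f x - f t‖ = ‖∫ s in t..x, f' s‖ := by rw [hftc]
    _ ≤ ∫ s in t..x, ‖f' s‖ := intervalIntegral.norm_integral_le_integral_norm htx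
    _ = ∫ s in Ioc t x, ‖f' s‖ := intervalIntegral.integral_of_le htx
    _ ≤ ∫ s in Icc a b, ‖f' s‖ :=
      setIntegral_mono_set hint.norm (ae_of_all _ fun _ => norm_nonneg _)
        (Ioc_subset_Icc_self.trans hsub).eventuallyLE

theorem abs_sub_integral_mul_le {f φ : ℝ → ℝ} {a b M x : ℝ} (hab : a ≤ b)
    (hf : ContinuousOn f (Icc a b)) (hφcont : ContinuousOn φ (Icc a b))
    (hφnonneg : ∀ t ∈ Icc a b, 0 ≤ φ t) (hφint : ∫ t in a..b, φ t = 1)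
    (hbound : ∀ t ∈ Icc a b, |f x - f t| ≤ M) :
    |f x - ∫ t in a..b, f t * φ t| ≤ M := by
  have huIcc : uIcc a b = Icc a b := uIcc_of_le hab
  have hφi : IntervalIntegrable φ volume a b := (huIcc ▸ hφcont).intervalIntegrable
  have hfφ : IntervalIntegrable (fun t => f t * φ t) volume a b :=
    (huIcc ▸ hf.mul hφcont).intervalIntegrable
  have hdiff : IntervalIntegrable (fun t => |(f x - f t) * φ t|) volume a b :=
    (huIcc ▸ ((continuousOn_const.sub hf).mul hφcont).abs).intervalIntegrable
  have hweighted : f x - ∫ t in a..b, f t * φ t = ∫ t in a..b, (f x - f t) * φ t := by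
    simp_rw [sub_mul]
    rw [intervalIntegral.integral_sub (hφi.const_mul _) hfφ, intervalIntegral.integral_const_mul,
      hφint, mul_one]
  calc |f x - ∫ t in a..b, f t * φ t| = |∫ t in a..b, (f x - f t) * φ t| := by rw [hweighted]
    _ ≤ ∫ t in a..b, |(f x - f t) * φ t| := intervalIntegral.abs_integral_le_integral_abs hab
    _ ≤ ∫ t in a..b, M * φ t := by
      refine intervalIntegral.integral_mono_on hab hdiff (hφi.const_mul _) fun t ht => ?_
      rw [abs_mul, abs_of_nonneg (hφnonneg t ht)]
      exact mul_le_mul_of_nonneg_right (hbound t ht) (hφnonneg t ht)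
    _ = M := by rw [intervalIntegral.integral_const_mul, hφint, mul_one]

theorem eLpNorm_le_measure_univ_mul_eLpNorm_of_ae_norm_le {α E F : Type*} [MeasurableSpace α]
    {μ : Measure α} [NormedAddCommGroup E] [NormedAddCommGroup F] {p : ℝ≥0∞} (hp : 1 ≤ p)
    {g : α → E} {h : α → F} (hh : Integrable h μ) (hg : ∀ᵐ x ∂μ, ‖g x‖ ≤ ∫ y, ‖h y‖ ∂μ) :
    eLpNorm g p μ ≤ μ univ * eLpNorm h p μ := by
  have hL1 : ENNReal.ofReal (∫ y, ‖h y‖ ∂μ) = eLpNorm h 1 μ := by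
    rw [eLpNorm_one_eq_lintegral_enorm, ofReal_integral_norm_eq_lintegral_enorm hh]
  have hHolder : eLpNorm h 1 μ ≤ eLpNorm h p μ * μ univ ^ (1 - p.toReal⁻¹) := by
    simpa [one_div] using eLpNorm_le_eLpNorm_mul_rpow_measure_univ hp hh.1
  have hexp : 0 ≤ 1 - p.toReal⁻¹ := by
    rcases eq_or_ne p ⊤ with rfl | hp_top
    · simp
    · exact sub_nonneg.2 (inv_le_one_of_one_le₀ (by
        simpa using ENNReal.toReal_mono hp_top hp))
  calc eLpNorm g p μ ≤ μ univ ^ p.toReal⁻¹ * eLpNorm h 1 μ := hL1 ▸ eLpNorm_le_of_ae_bound hg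
    _ ≤ μ univ ^ p.toReal⁻¹ * (eLpNorm h p μ * μ univ ^ (1 - p.toReal⁻¹)) := by gcongr
    _ = μ univ ^ (p.toReal⁻¹ + (1 - p.toReal⁻¹)) * eLpNorm h p μ := by
      rw [ENNReal.rpow_add_of_nonneg _ _ (by positivity) hexp]
      ring
    _ = μ univ * eLpNorm h p μ := by norm_num

/-- (Generalized Poincaré inequality.) Let `a < b`, `1 ≤ p ≤ ∞`, and let
`φ ≥ 0` be continuous on `[a,b]` with `∫_a^b φ = 1`. There is a constant `C` (depending
only on `a`, `b`, `p`) such that for every `f` differentiable on `[a,b]` with derivative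
`f'`, both in `L^p[a,b]`:
`‖f - ∫_a^b f φ‖_{L^p[a,b]} ≤ C ‖f'‖_{L^p[a,b]}`. -/
theorem weighted_poincare (a b : ℝ) (hab : a < b) (p : ℝ≥0∞) (hp : 1 ≤ p)
    (φ : ℝ → ℝ) (hφcont : ContinuousOn φ (Set.Icc a b))
    (hφnonneg : ∀ x ∈ Set.Icc a b, 0 ≤ φ x) (hφint : ∫ x in a..b, φ x = 1) :
    ∃ C : ℝ, 0 < C ∧ ∀ f f' : ℝ → ℝ,
      (∀ x ∈ Set.Icc a b, HasDerivWithinAt f (f' x) (Set.Icc a b) x) →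
      MemLp f p (volume.restrict (Set.Icc a b)) →
      MemLp f' p (volume.restrict (Set.Icc a b)) →
      eLpNorm (fun x => f x - ∫ t in a..b, f t * φ t) p (volume.restrict (Set.Icc a b)) ≤
        ENNReal.ofReal C * eLpNorm f' p (volume.restrict (Set.Icc a b)) := by
  refine ⟨b - a, sub_pos.2 hab, fun f f' hderiv _ hf' => ?_⟩
  have hint : IntegrableOn f' (Icc a b) := hf'.integrable hp
  have hf : ContinuousOn f (Icc a b) := fun x hx => (hderiv x hx).continuousWithinAt
  have hbound : ∀ᵐ x ∂volume.restrict (Icc a b),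
      ‖f x - ∫ t in a..b, f t * φ t‖ ≤ ∫ s in Icc a b, ‖f' s‖ := by
    refine (ae_restrict_iff' measurableSet_Icc).2 (ae_of_all _ fun x hx => ?_)
    exact abs_sub_integral_mul_le hab.le hf hφcont hφnonneg hφint fun t ht =>
      norm_sub_le_setIntegral_norm_deriv hderiv hint hx ht
  simpa using eLpNorm_le_measure_univ_mul_eLpNorm_of_ae_norm_le hp hint hbound
end Paper
end

section
/- Let X be a real Banach space and Φ : X → ℝ a continuously (Fréchet) differentiable functional such that: (1) Φ(0) = 0 and there exist ρ > 0 and α > 0 with Φ(u) ≥ α for all u with ‖u‖ = ρ; (2) there exists β ∈ X with ‖β‖ > ρ and Φ(β) ≤ 0. Let Γ = {g ∈ C([0,1], X) : g(0) = 0, g(1) = β} and c = inf_{g∈Γ} max_{t∈[0,1]} Φ(g(t)). Then c ≥ α and there exists a sequence (uₙ) in X with Φ(uₙ) → c and Φ′(uₙ) → 0 in the dual space X* as n → ∞. -/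
open Filter Topology unitInterval
noncomputable section
namespace Paper

/-!
Every path from `0` to `β` crosses the sphere `‖u‖ = ρ`, so `c ≥ α > 0 ≥ max (Φ 0) (Φ β)`.
Ekeland's variational principle for `g ↦ max (Φ ∘ g)` on the complete space of such paths gives,
for each `ε > 0`, an almost minimal path `g` that no path improves by more than `(ε / 2) • dist`.
If `‖Φ'‖ > ε` at every maximum point of `Φ ∘ g`, moving `g` a small distance along a continuous
pseudo-gradient field (glued by a partition of unity, vanishing at the endpoints) lowers the
maximum by more than that; so some maximum point `u` has `c ≤ Φ u ≤ c + ε` and `‖Φ' u‖ ≤ ε`.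
-/

open Set Metric

section Ekeland

variable {Y : Type*} [MetricSpace Y] {F : Y → ℝ} {k : ℝ}

lemma add_mul_dist_le_trans (hk : 0 ≤ k) {x y z : Y} (hxy : F y + k * dist x y ≤ F x)
    (hyz : F z + k * dist y z ≤ F y) : F z + k * dist x z ≤ F x := by
  nlinarith [mul_le_mul_of_nonneg_left (dist_triangle x y z) hk]

lemma cauchySeq_of_add_mul_dist_le (hbdd : BddBelow (range F)) (hk : 0 < k) {u : ℕ → Y}
    (hu : ∀ n m, n ≤ m → F (u m) + k * dist (u n) (u m) ≤ F (u n)) : CauchySeq u := by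
  have hanti : Antitone (F ∘ u) := antitone_nat_of_succ_le fun n => by
    have := hu n (n + 1) n.le_succ
    show F (u (n + 1)) ≤ F (u n)
    nlinarith [dist_nonneg (x := u n) (y := u (n + 1))]
  obtain ⟨L, hL⟩ : ∃ L, Tendsto (F ∘ u) atTop (𝓝 L) :=
    ⟨_, tendsto_atTop_ciInf hanti (hbdd.mono (range_comp_subset_range u F))⟩
  refine cauchySeq_of_le_tendsto_0' (fun n => (F (u n) - L) / k) (fun n m hnm => ?_) ?_
  · have hLm : L ≤ F (u m) := hanti.le_of_tendsto hL m
    rw [le_div_iff₀ hk]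
    linarith [hu n m hnm]
  · simpa using (hL.sub_const L).div_const k

/-- Ekeland's variational principle. -/
theorem exists_le_forall_le_add_mul_dist [CompleteSpace Y] (hF : Continuous F)
    (hbdd : BddBelow (range F)) (hk : 0 < k) (y₀ : Y) :
    ∃ y, F y ≤ F y₀ ∧ ∀ z, F y ≤ F z + k * dist y z := by
  set S : Y → Set Y := fun x => {z | F z + k * dist x z ≤ F x}
  have hS_mem : ∀ {x z}, z ∈ S x ↔ F z + k * dist x z ≤ F x := Iff.rfl
  have hS_self : ∀ x, x ∈ S x := fun x => by simp [hS_mem]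
  have hS_trans : ∀ {x y z}, y ∈ S x → z ∈ S y → z ∈ S x := add_mul_dist_le_trans hk.le
  have hS_closed : ∀ x, IsClosed (S x) := fun x =>
    isClosed_le (by fun_prop) continuous_const
  have hstep : ∀ (n : ℕ) (x : Y), ∃ y ∈ S x, ∀ z ∈ S x, F y ≤ F z + (1 / 2) ^ n := by
    intro n x
    have hne : (F '' S x).Nonempty := ⟨F x, mem_image_of_mem F (hS_self x)⟩
    obtain ⟨_, ⟨y, hy, rfl⟩, hlt⟩ :=
      Real.lt_sInf_add_pos hne (by positivity : (0 : ℝ) < (1 / 2) ^ n)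
    refine ⟨y, hy, fun z hz => ?_⟩
    have := csInf_le (hbdd.mono (image_subset_range F _)) (mem_image_of_mem F hz)
    linarith
  choose next hnextS hnext using hstep
  let u : ℕ → Y := fun n => Nat.rec y₀ next n
  have hchain : ∀ n m, n ≤ m → u m ∈ S (u n) := fun n m hnm => by
    induction m, hnm using Nat.le_induction with
    | base => exact hS_self _
    | succ m _ ih => exact hS_trans ih (hnextS m (u m))
  have hcauchy : CauchySeq u := cauchySeq_of_add_mul_dist_le hbdd hk fun n m hnm => hchain n m hnm
  obtain ⟨y, hy⟩ := cauchySeq_tendsto_of_complete hcauchy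
  have hyS : ∀ n, y ∈ S (u n) := fun n =>
    (hS_closed _).mem_of_tendsto hy (eventually_atTop.2 ⟨n, hchain n⟩)
  refine ⟨y, ?_, fun z => ?_⟩
  · have : F y + k * dist y₀ y ≤ F y₀ := hyS 0
    nlinarith [dist_nonneg (x := y₀) (y := y)]
  · by_contra! hz
    have hzS : ∀ n, z ∈ S (u n) := fun n => hS_trans (hyS n) hz.le
    have hle : ∀ n : ℕ, F y ≤ F z + (1 / 2) ^ n := fun n => by
      have h1 := hS_mem.1 (hyS (n + 1))
      have h2 := hnext n (u n) z (hzS n)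
      nlinarith [dist_nonneg (x := u (n + 1)) (y := y)]
    have hlim : Tendsto (fun n : ℕ => F z + (1 / 2 : ℝ) ^ n) atTop (𝓝 (F z)) := by
      simpa using tendsto_const_nhds.add
        (tendsto_pow_atTop_nhds_zero_of_lt_one (by norm_num : (0 : ℝ) ≤ 1 / 2) (by norm_num))
    have : F y ≤ F z := ge_of_tendsto' hlim hle
    nlinarith [dist_nonneg (x := y) (y := z)]

end Ekeland

lemma _root_.IsCompact.exists_pos_forall_dist_lt {α β : Type*} [PseudoMetricSpace α]
    [PseudoMetricSpace β] {K : Set α} (hK : IsCompact K) {f : α → β} (hf : Continuous f)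
    {η : ℝ} (hη : 0 < η) : ∃ δ > 0, ∀ x ∈ K, ∀ y, dist x y < δ → dist (f x) (f y) < η := by
  obtain ⟨δ, hδ, hδη⟩ := mem_uniformity_dist.1 <|
    hK.uniformContinuousAt_of_continuousAt f (fun x _ => hf.continuousAt) (dist_mem_uniformity hη)
  exact ⟨δ, hδ, fun x hx y hxy => hδη hxy hx⟩

lemma _root_.IsCompact.exists_lt_forall_le {α : Type*} [TopologicalSpace α] {K : Set α}
    (hK : IsCompact K) {f : α → ℝ} (hf : ContinuousOn f K) {m : ℝ} (hfm : ∀ x ∈ K, f x < m) :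
    ∃ m' < m, ∀ x ∈ K, f x ≤ m' := by
  rcases K.eq_empty_or_nonempty with rfl | hne
  · exact ⟨m - 1, by linarith, by simp⟩
  · obtain ⟨x₀, hx₀, hmax⟩ := hK.exists_isMaxOn hne hf
    exact ⟨f x₀, hfm x₀ hx₀, hmax⟩

lemma le_add_apply_add_mul_norm {E : Type*} [NormedAddCommGroup E] [NormedSpace ℝ E]
    {Φ : E → ℝ} {Φ' : E → E →L[ℝ] ℝ} (hdiff : ∀ x, HasFDerivAt Φ (Φ' x) x) {x v : E} {η : ℝ}
    (hη : ∀ y ∈ closedBall x ‖v‖, ‖Φ' y - Φ' x‖ ≤ η) :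
    Φ (x + v) ≤ Φ x + Φ' x v + η * ‖v‖ := by
  have h := (convex_closedBall x ‖v‖).norm_image_sub_le_of_norm_hasFDerivWithin_le'
    (fun y _ => (hdiff y).hasFDerivWithinAt) hη (mem_closedBall_self (norm_nonneg v))
    (y := x + v) (by simp)
  rw [add_sub_cancel_left, Real.norm_eq_abs, abs_le] at h
  linarith [h.2]

lemma _root_.IsCompact.exists_pos_forall_le_add_apply_add_mul_norm {E : Type*}
    [NormedAddCommGroup E] [NormedSpace ℝ E] {K : Set E} (hK : IsCompact K) {Φ : E → ℝ}
    {Φ' : E → E →L[ℝ] ℝ} (hdiff : ∀ x, HasFDerivAt Φ (Φ' x) x) (hcont : Continuous Φ') {η : ℝ}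
    (hη : 0 < η) : ∃ δ > 0, ∀ x ∈ K, ∀ v, ‖v‖ < δ → Φ (x + v) ≤ Φ x + Φ' x v + η * ‖v‖ := by
  obtain ⟨δ, hδ, hδη⟩ := hK.exists_pos_forall_dist_lt hcont hη
  refine ⟨δ, hδ, fun x hx v hv => le_add_apply_add_mul_norm hdiff fun y hy => ?_⟩
  rw [← dist_eq_norm, dist_comm]
  exact (hδη x hx y ((dist_comm x y ▸ mem_closedBall.1 hy).trans_lt hv)).le

lemma exists_norm_le_one_apply_lt_neg {E : Type*} [NormedAddCommGroup E]
    [NormedSpace ℝ E] (f : E →L[ℝ] ℝ) {a : ℝ} (ha : a < ‖f‖) : ∃ v, ‖v‖ ≤ 1 ∧ f v < -a := by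
  obtain ⟨x, hx, hax⟩ := f.exists_lt_apply_of_lt_opNorm ha
  rcases le_or_gt (f x) 0 with h | h
  · exact ⟨x, hx.le, by rw [Real.norm_of_nonpos h] at hax; linarith⟩
  · exact ⟨-x, by simpa using hx.le, by rw [Real.norm_of_nonneg h.le] at hax; simp; linarith⟩

theorem exists_continuous_descent_field {J E : Type*} [TopologicalSpace J] [NormalSpace J]
    [ParacompactSpace J] [NormedAddCommGroup E] [NormedSpace ℝ E] {L : J → E →L[ℝ] ℝ}
    (hL : Continuous L) {M A : Set J} (hM : IsClosed M) (hA : IsClosed A) (hMA : Disjoint M A)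
    {a : ℝ} (ha : 0 ≤ a) (hLa : ∀ t ∈ M, a < ‖L t‖) :
    ∃ w : C(J, E), (∀ t, ‖w t‖ ≤ 1) ∧ (∀ t, L t (w t) ≤ 0) ∧ (∀ t ∈ M, L t (w t) ≤ -a) ∧
      ∀ t ∈ A, w t = 0 := by
  suffices ∃ w : C(J, E), ∀ t, ‖w t‖ ≤ 1 ∧ L t (w t) ≤ 0 ∧ (t ∈ M → L t (w t) ≤ -a) ∧
      (t ∈ A → w t = 0) by
    obtain ⟨w, hw⟩ := this
    exact ⟨w, fun t => (hw t).1, fun t => (hw t).2.1, fun t => (hw t).2.2.1, fun t => (hw t).2.2.2⟩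
  refine exists_continuous_forall_mem_convex_of_local_const (E := E)
    (t := fun t => {v | ‖v‖ ≤ 1 ∧ L t v ≤ 0 ∧ (t ∈ M → L t v ≤ -a) ∧ (t ∈ A → v = 0)})
    (fun t => ?_) fun t => ?_
  · have hMt : Convex ℝ {v : E | t ∈ M → L t v ≤ -a} := by
      by_cases ht : t ∈ M
      · simpa [ht] using convex_halfSpace_le (L t).isLinear (-a)
      · simpa [ht] using convex_univ
    have hAt : Convex ℝ {v : E | t ∈ A → v = 0} := by
      by_cases ht : t ∈ A
      · simp [ht]
      · simpa [ht] using convex_univ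
    convert (convex_closedBall (0 : E) 1).inter
      ((convex_halfSpace_le (L t).isLinear 0).inter (hMt.inter hAt)) using 1
    ext v
    simp only [mem_inter_iff, mem_closedBall_zero_iff]
    rfl
  by_cases ht : t ∈ M
  · obtain ⟨v, hv, hva⟩ := exists_norm_le_one_apply_lt_neg (L t) (hLa t ht)
    refine ⟨v, ?_⟩
    filter_upwards [(isOpen_lt (hL.clm_apply continuous_const) continuous_const).mem_nhds hva,
      hA.isOpen_compl.mem_nhds (hMA.notMem_of_mem_left ht)] with s hs hsA
    exact ⟨by simpa using hv, hs.le.trans (by linarith), fun _ => hs.le, fun h => (hsA h).elim⟩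
  · refine ⟨0, ?_⟩
    filter_upwards [hM.isOpen_compl.mem_nhds ht] with s hs
    simp_all

section MaxAlong

variable {J X : Type*} [TopologicalSpace J] [TopologicalSpace X]

def maxAlong (Φ : X → ℝ) (g : C(J, X)) : ℝ := sSup (range fun t => Φ (g t))

variable {Φ : X → ℝ}

lemma maxAlong_le [Nonempty J] {g : C(J, X)} {m : ℝ} (h : ∀ t, Φ (g t) ≤ m) :
    maxAlong Φ g ≤ m :=
  csSup_le (range_nonempty _) (forall_mem_range.2 h)

variable [CompactSpace J]

lemma le_maxAlong (hΦ : Continuous Φ) (g : C(J, X)) (t : J) : Φ (g t) ≤ maxAlong Φ g :=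
  le_csSup (isCompact_range (hΦ.comp g.continuous)).bddAbove (mem_range_self t)

lemma continuous_maxAlong [LocallyCompactSpace J] (hΦ : Continuous Φ) :
    Continuous (maxAlong (J := J) Φ) := by
  have := isCompact_univ.continuous_sSup (f := fun (g : C(J, X)) (t : J) => Φ (g t))
    (hΦ.comp continuous_eval)
  simp only [image_univ] at this
  exact this

end MaxAlong

section Deformation

variable {J X : Type*} [TopologicalSpace J] [CompactSpace J] [T2Space J] [Nonempty J]
  [NormedAddCommGroup X] [NormedSpace ℝ X] {Φ : X → ℝ} {Φ' : X → X →L[ℝ] ℝ}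

theorem exists_maxAlong_add_mul_dist_lt (hdiff : ∀ x, HasFDerivAt Φ (Φ' x) x)
    (hcont : Continuous Φ') {A : Set J} (hA : IsClosed A) (g : C(J, X))
    (hgA : ∀ a ∈ A, Φ (g a) < maxAlong Φ g) {k ε : ℝ} (hk : 0 ≤ k) (hkε : k < ε)
    (hcrit : ∀ t, maxAlong Φ g ≤ Φ (g t) → ε < ‖Φ' (g t)‖) :
    ∃ h : C(J, X), (∀ a ∈ A, h a = g a) ∧ maxAlong Φ h + k * dist g h < maxAlong Φ g := by
  have hΦ : Continuous Φ := Differentiable.continuous fun x => (hdiff x).differentiableAt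
  have hΦg : Continuous fun t => Φ (g t) := hΦ.comp g.continuous
  set m := maxAlong Φ g
  set M : Set J := {t | m ≤ Φ (g t)}
  obtain ⟨w, hw_norm, hw_desc, hwM, hwA⟩ := exists_continuous_descent_field
    (hcont.comp g.continuous)
    (isClosed_le continuous_const hΦg : IsClosed M) hA
    (disjoint_left.2 fun t ht ha => (hgA t ha).not_ge ht) (hk.trans hkε.le) hcrit
  obtain ⟨η, hη, hkη⟩ : ∃ η > 0, k + 2 * η < ε := ⟨(ε - k) / 3, by linarith, by linarith⟩
  set N : Set J := {t | Φ' (g t) (w t) < -(k + 2 * η)}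
  have hN : IsOpen N :=
    isOpen_lt ((hcont.comp g.continuous).clm_apply w.continuous) continuous_const
  obtain ⟨m', hm', hm'N⟩ := hN.isClosed_compl.isCompact.exists_lt_forall_le hΦg.continuousOn
    fun t ht => lt_of_not_ge fun hmt => ht <| (hwM t hmt).trans_lt (by linarith)
  obtain ⟨δ, hδ, hδη⟩ :=
    (isCompact_range g.continuous).exists_pos_forall_le_add_apply_add_mul_norm hdiff hcont hη
  -- off `N` the descent is weaker, but there `Φ ∘ g ≤ m'`, which the bound on `lam` compensates
  set lam := min (δ / 2) ((m - m') / (k + 2 * η))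
  have hlam : 0 < lam := lt_min (by positivity) (div_pos (by linarith) (by positivity))
  have hlam_gap : (k + 2 * η) * lam ≤ m - m' := by
    rw [← le_div_iff₀' (by positivity)]; exact min_le_right _ _
  have hw_small : ∀ t, ‖lam • w t‖ ≤ lam := fun t => by
    simpa [norm_smul, abs_of_pos hlam] using mul_le_of_le_one_right hlam.le (hw_norm t)
  refine ⟨g + lam • w, fun a ha => by simp [hwA a ha], ?_⟩
  have hdist : dist g (g + lam • w) ≤ lam := (ContinuousMap.dist_le hlam.le).2 fun t => by
    simpa [dist_eq_norm] using hw_small t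
  have hstep : ∀ t, Φ (g t + lam • w t) ≤ Φ (g t) + lam * Φ' (g t) (w t) + η * lam := by
    intro t
    have := hδη _ (mem_range_self t) (lam • w t)
      ((hw_small t).trans_lt ((min_le_left _ _).trans_lt (half_lt_self hδ)))
    rw [map_smul, smul_eq_mul] at this
    nlinarith [mul_le_mul_of_nonneg_left (hw_small t) hη.le]
  have hmax : maxAlong Φ (g + lam • w) ≤ m - (k + η) * lam := maxAlong_le fun t => by
    have h := hstep t
    simp only [ContinuousMap.add_apply, ContinuousMap.coe_smul, Pi.smul_apply]
    by_cases ht : t ∈ N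
    · have : Φ (g t) ≤ m := le_maxAlong hΦ g t
      nlinarith [mul_le_mul_of_nonneg_left (le_of_lt ht) hlam.le]
    · have : Φ (g t) ≤ m' := hm'N t ht
      have hdesc : Φ' (g t) (w t) ≤ 0 := hw_desc t
      nlinarith [mul_nonpos_of_nonneg_of_nonpos hlam.le hdesc]
  nlinarith [mul_le_mul_of_nonneg_left hdist hk]

theorem exists_almost_critical_of_le_maxAlong [CompleteSpace X] (hdiff : ∀ x, HasFDerivAt Φ (Φ' x) x)
    (hcont : Continuous Φ') {A : Set J} (hA : IsClosed A) {Γ : Set C(J, X)} (hΓ : IsClosed Γ)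
    (hΓA : ∀ g ∈ Γ, ∀ h : C(J, X), (∀ a ∈ A, h a = g a) → h ∈ Γ) {c : ℝ}
    (hc : ∀ g ∈ Γ, c ≤ maxAlong Φ g) (hcA : ∀ g ∈ Γ, ∀ a ∈ A, Φ (g a) < c)
    {g₀ : C(J, X)} (hg₀ : g₀ ∈ Γ) {ε : ℝ} (hε : 0 < ε) (hg₀ε : maxAlong Φ g₀ ≤ c + ε) :
    ∃ u, c ≤ Φ u ∧ Φ u ≤ c + ε ∧ ‖Φ' u‖ ≤ ε := by
  have hΦ : Continuous Φ := Differentiable.continuous fun x => (hdiff x).differentiableAt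
  have : CompleteSpace Γ := hΓ.completeSpace_coe
  obtain ⟨⟨g, hg⟩, hgg₀, hmin⟩ := exists_le_forall_le_add_mul_dist
    (F := fun g : Γ => maxAlong Φ (g : C(J, X)))
    ((continuous_maxAlong hΦ).comp continuous_subtype_val)
    ⟨c, by rintro _ ⟨g, rfl⟩; exact hc g g.2⟩ (half_pos hε) ⟨g₀, hg₀⟩
  by_contra! hcrit
  obtain ⟨h, hhA, hlt⟩ := exists_maxAlong_add_mul_dist_lt hdiff hcont hA g
    (fun a ha => (hcA g hg a ha).trans_le (hc g hg)) (half_pos hε).le (half_lt_self hε)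
    fun t ht => hcrit _ ((hc g hg).trans ht) ((le_maxAlong hΦ g t).trans (hgg₀.trans hg₀ε))
  exact (hmin ⟨h, hΓA g hg h hhA⟩).not_gt hlt

end Deformation

lemma exists_seq_tendsto_of_forall_pos {X : Type*} {f g : X → ℝ} {c : ℝ}
    (h : ∀ ε > 0, ∃ x, c ≤ f x ∧ f x ≤ c + ε ∧ g x ≤ ε) (hg : ∀ x, 0 ≤ g x) :
    ∃ u : ℕ → X, Tendsto (fun n => f (u n)) atTop (𝓝 c) ∧
      Tendsto (fun n => g (u n)) atTop (𝓝 0) := by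
  choose u hu₁ hu₂ hu₃ using fun n : ℕ => h (1 / (n + 1)) Nat.one_div_pos_of_nat
  have hlim := tendsto_one_div_add_atTop_nhds_zero_nat (𝕜 := ℝ)
  refine ⟨u, tendsto_of_tendsto_of_tendsto_of_le_of_le tendsto_const_nhds ?_ hu₁ hu₂,
    squeeze_zero (fun n => hg (u n)) hu₃ hlim⟩
  simpa using tendsto_const_nhds.add hlim

/-- (Mountain pass / Palais–Smale sequence.) Let `X` be a real Banach
space and `Φ : X → ℝ` be `C¹` with Fréchet derivative `Φ'`. Assume `Φ(0) = 0`, there are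
`ρ, α > 0` with `Φ ≥ α` on the sphere `‖u‖ = ρ`, and there is `β` with `‖β‖ > ρ` and
`Φ(β) ≤ 0`. Let `c` be the minimax value over paths from `0` to `β`. Then `c ≥ α` and
there is a sequence `(uₙ)` with `Φ(uₙ) → c` and `‖Φ'(uₙ)‖ → 0`. -/
theorem mountain_pass_palais_smale
    {X : Type*} [NormedAddCommGroup X] [NormedSpace ℝ X] [CompleteSpace X]
    (Φ : X → ℝ) (Φ' : X → X →L[ℝ] ℝ)
    (hdiff : ∀ x, HasFDerivAt Φ (Φ' x) x) (hcont : Continuous Φ')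
    (hΦ0 : Φ 0 = 0) (ρ α : ℝ) (hρ : 0 < ρ) (hα : 0 < α)
    (hsphere : ∀ u : X, ‖u‖ = ρ → α ≤ Φ u)
    (β : X) (hβ : ρ < ‖β‖) (hΦβ : Φ β ≤ 0)
    (c : ℝ)
    (hc : c = sInf {y | ∃ g : C(unitInterval, X),
      g 0 = 0 ∧ g 1 = β ∧ y = sSup (Set.range fun t => Φ (g t))}) :
    α ≤ c ∧ ∃ u : ℕ → X,
      Tendsto (fun n => Φ (u n)) atTop (𝓝 c) ∧
      Tendsto (fun n => ‖Φ' (u n)‖) atTop (𝓝 0) := by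
  have hΦ : Continuous Φ := Differentiable.continuous fun x => (hdiff x).differentiableAt
  set Γ : Set C(I, X) := {g | g 0 = 0 ∧ g 1 = β}
  replace hc : c = sInf (maxAlong Φ '' Γ) := by
    rw [hc]; congr 1; ext y; simp [Γ, maxAlong, eq_comm, and_assoc]
  have hΓ : IsClosed Γ := (isClosed_eq (continuous_eval_const 0) continuous_const).inter
    (isClosed_eq (continuous_eval_const 1) continuous_const)
  have hΓne : (maxAlong Φ '' Γ).Nonempty :=
    ⟨_, mem_image_of_mem _ (show ⟨fun t => (t : ℝ) • β, by fun_prop⟩ ∈ Γ by simp [Γ])⟩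
  have hαΓ : ∀ g ∈ Γ, α ≤ maxAlong Φ g := fun g hg => by
    obtain ⟨t, ht⟩ := intermediate_value_univ 0 1 g.continuous.norm
      (show ρ ∈ Icc ‖g 0‖ ‖g 1‖ by simp [hg.1, hg.2, hρ.le, hβ.le])
    exact (hsphere _ ht).trans (le_maxAlong hΦ g t)
  have hcΓ : ∀ g ∈ Γ, c ≤ maxAlong Φ g := fun g hg =>
    hc ▸ csInf_le ⟨α, forall_mem_image.2 hαΓ⟩ (mem_image_of_mem _ hg)
  have hαc : α ≤ c := hc ▸ le_csInf hΓne (forall_mem_image.2 hαΓ)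
  refine ⟨hαc, exists_seq_tendsto_of_forall_pos (fun ε hε => ?_) fun _ => norm_nonneg _⟩
  obtain ⟨_, ⟨g₀, hg₀, rfl⟩, hg₀ε⟩ := Real.lt_sInf_add_pos hΓne hε
  refine exists_almost_critical_of_le_maxAlong hdiff hcont (A := {0, 1}) (by simp) hΓ
    (fun g hg h hh => ?_) hcΓ (fun g hg a ha => ?_) hg₀ hε (hc ▸ hg₀ε).le
  · simpa [Γ, hh] using hg
  · rcases ha with rfl | rfl <;> simp only [hg.1, hg.2, hΦ0] <;> linarith

end Paper
end
end

section
/- Let f : ℝ → ℝ and φ : ℝ² → ℝ be C^∞ functions, and let α ∈ ℕ² be a multi-index with |α| ≥ 1. Then ∂^α(f∘φ) = Σ_{j=1}^{|α|} (f^{(j)}∘φ)/j! · Σ_{α₁+⋯+α_j = α, |α_i| ≥ 1 for all i} (α!/(α₁!⋯α_j!)) · ∂^{α₁}φ ⋯ ∂^{α_j}φ, where the inner sum is over all ordered j-tuples (α₁,…,α_j) of multi-indices in ℕ², each nonzero, summing to α. -/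
open Finset
noncomputable section
namespace Paper

/-- Iterated partial derivative `∂ₓ^{α₁} ∂_y^{α₂} φ` for a multi-index `α ∈ ℕ²`. -/
def pd (α : ℕ × ℕ) (φ : ℝ × ℝ → ℝ) (v : ℝ × ℝ) : ℝ :=
  iteratedDeriv α.1 (fun x => iteratedDeriv α.2 (fun y => φ (x, y)) v.2) v.1

lemma pd_succ_fst (a b : ℕ) (φ : ℝ × ℝ → ℝ) (v : ℝ × ℝ) :
    pd (a+1, b) φ v = deriv (fun x => pd (a,b) φ (x, v.2)) v.1 := by
  simp only [pd, iteratedDeriv_succ]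

lemma pd_zero_succ (b : ℕ) (φ : ℝ × ℝ → ℝ) (v : ℝ × ℝ) :
    pd (0, b+1) φ v = deriv (fun y => pd (0,b) φ (v.1, y)) v.2 := by
  simp only [pd, iteratedDeriv_succ, iteratedDeriv_zero]

lemma hasDerivAt_fst (ψ : ℝ × ℝ → ℝ) (hψ : ContDiff ℝ (⊤ : ℕ∞) ψ) (v : ℝ × ℝ) :
    HasDerivAt (fun x => ψ (x, v.2)) (fderiv ℝ ψ v (1, 0)) v.1 := by
  have h1 : HasDerivAt (fun x : ℝ => (x, v.2)) ((1 : ℝ), (0 : ℝ)) v.1 := by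
    simpa using (hasDerivAt_id v.1).prodMk (hasDerivAt_const v.1 v.2)
  have h2 : HasFDerivAt ψ (fderiv ℝ ψ v) v :=
    (hψ.differentiable (by simp) v).hasFDerivAt
  have h3 : v = (fun x : ℝ => (x, v.2)) v.1 := by simp
  rw [h3] at h2
  simpa [Function.comp_def] using h2.comp_hasDerivAt v.1 h1

lemma hasDerivAt_snd (ψ : ℝ × ℝ → ℝ) (hψ : ContDiff ℝ (⊤ : ℕ∞) ψ) (v : ℝ × ℝ) :
    HasDerivAt (fun y => ψ (v.1, y)) (fderiv ℝ ψ v (0, 1)) v.2 := by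
  have h1 : HasDerivAt (fun y : ℝ => (v.1, y)) ((0 : ℝ), (1 : ℝ)) v.2 := by
    simpa using (hasDerivAt_const v.2 v.1).prodMk (hasDerivAt_id v.2)
  have h2 : HasFDerivAt ψ (fderiv ℝ ψ v) v :=
    (hψ.differentiable (by simp) v).hasFDerivAt
  have h3 : v = (fun y : ℝ => (v.1, y)) v.2 := by simp
  rw [h3] at h2
  simpa [Function.comp_def] using h2.comp_hasDerivAt v.2 h1

lemma contDiff_pdX (ψ : ℝ × ℝ → ℝ) (hψ : ContDiff ℝ (⊤ : ℕ∞) ψ) :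
    ContDiff ℝ (⊤ : ℕ∞) (fun v : ℝ × ℝ => deriv (fun x => ψ (x, v.2)) v.1) := by
  have : (fun v : ℝ × ℝ => deriv (fun x => ψ (x, v.2)) v.1)
      = fun v => fderiv ℝ ψ v (1, 0) := by
    funext v; exact (hasDerivAt_fst ψ hψ v).deriv
  rw [this]
  exact (hψ.fderiv_right (by simp)).clm_apply contDiff_const

lemma contDiff_pdY (ψ : ℝ × ℝ → ℝ) (hψ : ContDiff ℝ (⊤ : ℕ∞) ψ) :
    ContDiff ℝ (⊤ : ℕ∞) (fun v : ℝ × ℝ => deriv (fun y => ψ (v.1, y)) v.2) := by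
  have : (fun v : ℝ × ℝ => deriv (fun y => ψ (v.1, y)) v.2)
      = fun v => fderiv ℝ ψ v (0, 1) := by
    funext v; exact (hasDerivAt_snd ψ hψ v).deriv
  rw [this]
  exact (hψ.fderiv_right (by simp)).clm_apply contDiff_const

lemma pd_zero (φ : ℝ × ℝ → ℝ) (v : ℝ × ℝ) : pd (0,0) φ v = φ v := by
  simp [pd, iteratedDeriv_zero]

lemma contDiff_pd (φ : ℝ × ℝ → ℝ) (hφ : ContDiff ℝ (⊤ : ℕ∞) φ) (α : ℕ × ℕ) :
    ContDiff ℝ (⊤ : ℕ∞) (pd α φ) := by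
  obtain ⟨a, b⟩ := α
  induction a with
  | zero =>
    induction b with
    | zero => simpa [funext (pd_zero φ)] using hφ
    | succ b ihb =>
      have : pd (0, b+1) φ = fun v : ℝ × ℝ => deriv (fun y => pd (0,b) φ (v.1, y)) v.2 :=
        funext fun v => pd_zero_succ b φ v
      rw [this]; exact contDiff_pdY _ ihb
  | succ a iha =>
    have : pd (a+1, b) φ = fun v : ℝ × ℝ => deriv (fun x => pd (a,b) φ (x, v.2)) v.1 :=
      funext fun v => pd_succ_fst a b φ v
    rw [this]; exact contDiff_pdX _ iha



lemma pd_one_zero (φ : ℝ × ℝ → ℝ) (v : ℝ × ℝ) :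
    pd (1,0) φ v = deriv (fun x => φ (x, v.2)) v.1 := by
  simp [pd, iteratedDeriv_succ, iteratedDeriv_zero]

lemma pd_swap (k : ℕ) (φ : ℝ × ℝ → ℝ) (v : ℝ × ℝ) :
    pd (k, 0) (fun w => φ (w.2, w.1)) (v.2, v.1) = pd (0, k) φ v := by
  simp [pd, iteratedDeriv_zero]

-- combinatorics


def T (j a b : ℕ) : Finset ((Fin j → ℕ) × (Fin j → ℕ)) :=
  (Finset.Nat.antidiagonalTuple j a ×ˢ Finset.Nat.antidiagonalTuple j b).filter
    fun t => ∀ i, (t.1 i, t.2 i) ≠ (0,0)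

def C (a b : ℕ) {j : ℕ} (t : (Fin j → ℕ) × (Fin j → ℕ)) : ℝ :=
  ((Nat.factorial a * Nat.factorial b : ℕ) : ℝ) /
    ((∏ i, Nat.factorial (t.1 i) * Nat.factorial (t.2 i) : ℕ) : ℝ)

def S (j a b : ℕ) (p : ℕ × ℕ → ℝ) : ℝ :=
  ∑ t ∈ T j a b, C a b t * ∏ i, p (t.1 i, t.2 i)

def W (a b : ℕ) (p : ℕ × ℕ → ℝ) {j : ℕ} (t : (Fin j → ℕ) × (Fin j → ℕ)) (i : Fin j) : ℝ :=
  (t.1 i : ℝ) * (C a b t * ∏ k, p (t.1 k, t.2 k))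

lemma mem_T {j a b : ℕ} {t : (Fin j → ℕ) × (Fin j → ℕ)} :
    t ∈ T j a b ↔ (∑ i, t.1 i = a) ∧ (∑ i, t.2 i = b) ∧ ∀ i, (t.1 i, t.2 i) ≠ (0,0) := by
  simp [T, Finset.mem_filter, Finset.mem_product, Finset.Nat.mem_antidiagonalTuple, and_assoc]

lemma C_succ_left (a b : ℕ) {j : ℕ} (t : (Fin j → ℕ) × (Fin j → ℕ)) :
    C (a+1) b t = ((a : ℝ)+1) * C a b t := by
  rw [C, C, Nat.factorial_succ]
  push_cast
  ring

lemma cancel_aux {n : ℕ} (hn : 0 < n) (N d : ℝ) :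
    (n : ℝ) * (N / ((n : ℝ) * d)) = N / d := by
  have hn' : (n : ℝ) ≠ 0 := Nat.cast_ne_zero.mpr hn.ne'
  rcases eq_or_ne d 0 with h | h
  · simp [h]
  · field_simp

lemma partA (m a b : ℕ) (p : ℕ × ℕ → ℝ) :
    ∑ x ∈ (T (m+1) (a+1) b ×ˢ (univ : Finset (Fin (m+1)))).filter
        (fun x => x.1.1 x.2 = 1 ∧ x.1.2 x.2 = 0),
      W a b p x.1 x.2
    = ((m : ℝ)+1) * p (1,0) * S m a b p := by
  classical
  have target : ((m : ℝ)+1) * p (1,0) * S m a b p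
      = ∑ y ∈ (T m a b) ×ˢ (univ : Finset (Fin (m+1))),
          (C a b y.1 * ∏ k, p (y.1.1 k, y.1.2 k)) * p (1,0) := by
    rw [Finset.sum_product]
    simp only [Finset.sum_const, Finset.card_univ, Fintype.card_fin, nsmul_eq_mul]
    rw [S, Finset.mul_sum]
    refine Finset.sum_congr rfl fun s _ => ?_
    push_cast
    ring
  rw [target]
  refine Finset.sum_nbij'
    (i := fun x => ((x.1.1 ∘ x.2.succAbove, x.1.2 ∘ x.2.succAbove), x.2))
    (j := fun y => ((y.2.insertNth 1 y.1.1, y.2.insertNth 0 y.1.2), y.2))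
    ?_ ?_ ?_ ?_ ?_
  · -- hi
    intro x hx
    obtain ⟨hxP, hq1, hq2⟩ := Finset.mem_filter.mp hx
    obtain ⟨hxT, -⟩ := Finset.mem_product.mp hxP
    obtain ⟨h1, h2, h3⟩ := mem_T.mp hxT
    rw [Fin.sum_univ_succAbove x.1.1 x.2] at h1
    rw [Fin.sum_univ_succAbove x.1.2 x.2] at h2
    refine Finset.mem_product.mpr ⟨mem_T.mpr ⟨?_, ?_, ?_⟩, Finset.mem_univ _⟩
    · simp only [Function.comp]
      omega
    · simp only [Function.comp]
      omega
    · intro k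
      exact h3 (x.2.succAbove k)
  · -- hj
    intro y hy
    obtain ⟨hyT, -⟩ := Finset.mem_product.mp hy
    obtain ⟨h1, h2, h3⟩ := mem_T.mp hyT
    refine Finset.mem_filter.mpr ⟨Finset.mem_product.mpr ⟨mem_T.mpr ⟨?_, ?_, ?_⟩,
      Finset.mem_univ _⟩, ?_, ?_⟩
    · rw [Fin.sum_univ_succAbove _ y.2]
      simp only [Fin.insertNth_apply_same, Fin.insertNth_apply_succAbove, h1]
      omega
    · rw [Fin.sum_univ_succAbove _ y.2]
      simp only [Fin.insertNth_apply_same, Fin.insertNth_apply_succAbove, h2]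
      omega
    · rw [Fin.forall_iff_succAbove y.2]
      constructor
      · simp [Fin.insertNth_apply_same]
      · intro k
        simp only [Fin.insertNth_apply_succAbove]
        exact h3 k
    · simp
    · simp
  · -- left_inv
    intro x hx
    obtain ⟨-, hq1, hq2⟩ := Finset.mem_filter.mp hx
    dsimp only
    refine Prod.ext (Prod.ext ?_ ?_) rfl
    · funext k
      rcases eq_or_ne k x.2 with rfl | hk
      · simp [Fin.insertNth_apply_same, hq1]
      · obtain ⟨j, rfl⟩ := Fin.exists_succAbove_eq hk
        simp [Fin.insertNth_apply_succAbove]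
    · funext k
      rcases eq_or_ne k x.2 with rfl | hk
      · simp [Fin.insertNth_apply_same, hq2]
      · obtain ⟨j, rfl⟩ := Fin.exists_succAbove_eq hk
        simp [Fin.insertNth_apply_succAbove]
  · -- right_inv
    intro y hy
    dsimp only
    refine Prod.ext (Prod.ext ?_ ?_) rfl
    · funext k; simp [Fin.insertNth_apply_succAbove]
    · funext k; simp [Fin.insertNth_apply_succAbove]
  · -- values
    intro x hx
    obtain ⟨-, hq1, hq2⟩ := Finset.mem_filter.mp hx
    dsimp only
    have hD : (∏ k, Nat.factorial (x.1.1 k) * Nat.factorial (x.1.2 k))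
        = ∏ k : Fin m, Nat.factorial (x.1.1 (x.2.succAbove k)) * Nat.factorial (x.1.2 (x.2.succAbove k)) := by
      rw [Fin.prod_univ_succAbove (fun k => Nat.factorial (x.1.1 k) * Nat.factorial (x.1.2 k)) x.2, hq1, hq2]
      simp
    have hP : (∏ k, p (x.1.1 k, x.1.2 k))
        = p (1,0) * ∏ k : Fin m, p (x.1.1 (x.2.succAbove k), x.1.2 (x.2.succAbove k)) := by
      rw [Fin.prod_univ_succAbove (fun k => p (x.1.1 k, x.1.2 k)) x.2, hq1, hq2]
    rw [W, hq1, hP, C, C, hD]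
    simp only [Function.comp]
    push_cast
    ring

lemma partB (m a b : ℕ) (p : ℕ × ℕ → ℝ) :
    ∑ x ∈ (T (m+1) (a+1) b ×ˢ (univ : Finset (Fin (m+1)))).filter
        (fun x => ¬(x.1.1 x.2 = 1 ∧ x.1.2 x.2 = 0)),
      W a b p x.1 x.2
    = ∑ t ∈ T (m+1) a b, C a b t *
        ∑ i, (∏ k ∈ univ.erase i, p (t.1 k, t.2 k)) * p (t.1 i + 1, t.2 i) := by
  classical
  have target : (∑ t ∈ T (m+1) a b, C a b t *
        ∑ i, (∏ k ∈ univ.erase i, p (t.1 k, t.2 k)) * p (t.1 i + 1, t.2 i))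
      = ∑ y ∈ T (m+1) a b ×ˢ (univ : Finset (Fin (m+1))),
          C a b y.1 * ((∏ k ∈ univ.erase y.2, p (y.1.1 k, y.1.2 k)) * p (y.1.1 y.2 + 1, y.1.2 y.2)) := by
    rw [Finset.sum_product]
    exact Finset.sum_congr rfl fun t _ => by rw [Finset.mul_sum]
  have restrict : ∑ x ∈ (T (m+1) (a+1) b ×ˢ (univ : Finset (Fin (m+1)))).filter
        (fun x => ¬(x.1.1 x.2 = 1 ∧ x.1.2 x.2 = 0)),
      W a b p x.1 x.2
      = ∑ x ∈ (T (m+1) (a+1) b ×ˢ (univ : Finset (Fin (m+1)))).filter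
        (fun x => ¬(x.1.1 x.2 = 1 ∧ x.1.2 x.2 = 0) ∧ 1 ≤ x.1.1 x.2),
      W a b p x.1 x.2 := by
    refine (Finset.sum_subset (Finset.monotone_filter_right _ fun x _ hx => hx.1) ?_).symm
    intro x hx hnx
    obtain ⟨hxP, hq⟩ := Finset.mem_filter.mp hx
    have h0 : x.1.1 x.2 = 0 := by
      by_contra h0
      exact hnx (Finset.mem_filter.mpr ⟨hxP, hq, by omega⟩)
    simp [W, h0]
  rw [restrict, target]
  refine Finset.sum_nbij'
    (i := fun x => ((Function.update x.1.1 x.2 (x.1.1 x.2 - 1), x.1.2), x.2))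
    (j := fun y => ((Function.update y.1.1 y.2 (y.1.1 y.2 + 1), y.1.2), y.2))
    ?_ ?_ ?_ ?_ ?_
  · -- hi
    intro x hx
    obtain ⟨hxP, hq, h1le⟩ := Finset.mem_filter.mp hx
    obtain ⟨hxT, -⟩ := Finset.mem_product.mp hxP
    obtain ⟨h1, h2, h3⟩ := mem_T.mp hxT
    refine Finset.mem_product.mpr ⟨mem_T.mpr ⟨?_, ?_, ?_⟩, Finset.mem_univ _⟩
    · rw [Finset.sum_update_of_mem (Finset.mem_univ x.2)]
      rw [← Finset.add_sum_erase _ x.1.1 (Finset.mem_univ x.2), Finset.erase_eq] at h1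
      omega
    · exact h2
    · intro k
      rcases eq_or_ne k x.2 with rfl | hk
      · refine fun hc => ?_
        simp only [Function.update_self, Prod.mk.injEq] at hc
        exact hq ⟨by omega, hc.2⟩
      · simpa [Function.update_of_ne hk] using h3 k
  · -- hj
    intro y hy
    obtain ⟨hyT, -⟩ := Finset.mem_product.mp hy
    obtain ⟨h1, h2, h3⟩ := mem_T.mp hyT
    refine Finset.mem_filter.mpr ⟨Finset.mem_product.mpr ⟨mem_T.mpr ⟨?_, ?_, ?_⟩,
      Finset.mem_univ _⟩, ?_, ?_⟩
    · rw [Finset.sum_update_of_mem (Finset.mem_univ y.2)]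
      rw [← Finset.add_sum_erase _ y.1.1 (Finset.mem_univ y.2), Finset.erase_eq] at h1
      omega
    · exact h2
    · intro k
      rcases eq_or_ne k y.2 with rfl | hk
      · simp [Function.update_self]
      · simpa [Function.update_of_ne hk] using h3 k
    · simp only [Function.update_self, ne_eq, Prod.mk.injEq, not_and]
      intro hfst
      have := h3 y.2
      simp only [ne_eq, Prod.mk.injEq, not_and] at this ⊢
      omega
    · simp [Function.update_self]
  · -- left_inv
    intro x hx
    obtain ⟨-, hq, h1le⟩ := Finset.mem_filter.mp hx
    dsimp only
    refine Prod.ext (Prod.ext ?_ rfl) rfl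
    funext k
    rcases eq_or_ne k x.2 with rfl | hk
    · simp only [Function.update_self]
      omega
    · simp [Function.update_of_ne hk]
  · -- right_inv
    intro y hy
    dsimp only
    refine Prod.ext (Prod.ext ?_ rfl) rfl
    funext k
    rcases eq_or_ne k y.2 with rfl | hk
    · simp [Function.update_self]
    · simp [Function.update_of_ne hk]
  · -- values
    intro x hx
    obtain ⟨hxP, hq, h1le⟩ := Finset.mem_filter.mp hx
    dsimp only
    have hupd_i : Function.update x.1.1 x.2 (x.1.1 x.2 - 1) x.2 = x.1.1 x.2 - 1 :=
      Function.update_self _ _ _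
    have herase : ∀ (g : ℕ × ℕ → ℝ), (∏ k ∈ univ.erase x.2,
          g (Function.update x.1.1 x.2 (x.1.1 x.2 - 1) k, x.1.2 k))
        = ∏ k ∈ univ.erase x.2, g (x.1.1 k, x.1.2 k) := by
      intro g
      refine Finset.prod_congr rfl fun k hk => ?_
      rw [Function.update_of_ne (Finset.mem_erase.mp hk).1]
    have hprod : (∏ k, p (x.1.1 k, x.1.2 k))
        = p (x.1.1 x.2, x.1.2 x.2) * ∏ k ∈ univ.erase x.2, p (x.1.1 k, x.1.2 k) :=
      (Finset.mul_prod_erase univ _ (Finset.mem_univ x.2)).symm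
    have hfacN : (∏ k, Nat.factorial (x.1.1 k) * Nat.factorial (x.1.2 k))
        = x.1.1 x.2 * ∏ k, Nat.factorial (Function.update x.1.1 x.2 (x.1.1 x.2 - 1) k)
            * Nat.factorial (x.1.2 k) := by
      rw [← Finset.mul_prod_erase univ
        (fun k => Nat.factorial (x.1.1 k) * Nat.factorial (x.1.2 k)) (Finset.mem_univ x.2),
        ← Finset.mul_prod_erase univ
        (fun k => Nat.factorial (Function.update x.1.1 x.2 (x.1.1 x.2 - 1) k)
            * Nat.factorial (x.1.2 k)) (Finset.mem_univ x.2)]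
      have he : (∏ k ∈ univ.erase x.2, Nat.factorial (Function.update x.1.1 x.2 (x.1.1 x.2 - 1) k)
            * Nat.factorial (x.1.2 k)) = ∏ k ∈ univ.erase x.2,
            Nat.factorial (x.1.1 k) * Nat.factorial (x.1.2 k) := by
        refine Finset.prod_congr rfl fun k hk => ?_
        rw [Function.update_of_ne (Finset.mem_erase.mp hk).1]
      rw [he, hupd_i, ← mul_assoc, ← mul_assoc]
      congr 2
      obtain ⟨n, hn⟩ := Nat.exists_eq_succ_of_ne_zero (show x.1.1 x.2 ≠ 0 by omega)
      rw [hn, Nat.factorial_succ, Nat.succ_sub_one]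
      try ring
    have hC : (x.1.1 x.2 : ℝ) * C a b x.1 = C a b (Function.update x.1.1 x.2 (x.1.1 x.2 - 1), x.1.2) := by
      rw [C, C, hfacN]
      push_cast
      exact cancel_aux (n := x.1.1 x.2) (by omega) _ _
    have hps : p (x.1.1 x.2, x.1.2 x.2)
        = p (Function.update x.1.1 x.2 (x.1.1 x.2 - 1) x.2 + 1, x.1.2 x.2) := by
      rw [hupd_i]
      congr 2
      omega
    rw [W, hprod, hps]
    rw [show ∀ A B D E : ℝ, A * (B * (D * E)) = (A * B) * (E * D) from fun _ _ _ _ => by ring, hC,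
      herase p]

lemma T_empty {j a b : ℕ} (h : a + b < j) : T j a b = ∅ := by
  rw [Finset.eq_empty_iff_forall_notMem]
  intro t ht
  obtain ⟨h1, h2, h3⟩ := mem_T.mp ht
  have key : ∀ i ∈ (univ : Finset (Fin j)), 1 ≤ t.1 i + t.2 i := by
    intro i _
    have := h3 i
    by_contra hc
    exact this (by simp only [Prod.mk.injEq]; omega)
  have hle := Finset.sum_le_sum key
  rw [Finset.sum_const, Finset.sum_add_distrib, h1, h2] at hle
  simp [Finset.card_univ] at hle
  omega

lemma S_zero_of_pos {a b : ℕ} (h : 1 ≤ a + b) (p : ℕ × ℕ → ℝ) : S 0 a b p = 0 := by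
  have hT : T 0 a b = ∅ := by
    rw [Finset.eq_empty_iff_forall_notMem]
    intro t ht
    obtain ⟨h1, h2, -⟩ := mem_T.mp ht
    simp at h1 h2
    omega
  rw [S, hT, Finset.sum_empty]

lemma comb (m a b : ℕ) (p : ℕ × ℕ → ℝ) :
    S (m+1) (a+1) b p
      = ((m:ℝ)+1) * p (1,0) * S m a b p
        + ∑ t ∈ T (m+1) a b, C a b t *
            ∑ i, (∏ k ∈ univ.erase i, p (t.1 k, t.2 k)) * p (t.1 i + 1, t.2 i) := by
  classical
  have step1 : S (m+1) (a+1) b p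
      = ∑ x ∈ T (m+1) (a+1) b ×ˢ (univ : Finset (Fin (m+1))), W a b p x.1 x.2 := by
    rw [S, Finset.sum_product]
    refine Finset.sum_congr rfl fun t ht => ?_
    obtain ⟨h1, -, -⟩ := mem_T.mp ht
    have hsum : (∑ i, (t.1 i : ℝ)) = ((a : ℝ) + 1) := by
      rw [← Nat.cast_sum, h1]; push_cast; ring
    simp only [W]
    rw [← Finset.sum_mul, hsum, C_succ_left, mul_assoc]
  rw [step1, ← Finset.sum_filter_add_sum_filter_not (T (m+1) (a+1) b ×ˢ univ)
      (fun x => x.1.1 x.2 = 1 ∧ x.1.2 x.2 = 0), partA m a b p, partB m a b p]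
-- analytic helpers
lemma hasDerivAt_pd_fst (φ : ℝ × ℝ → ℝ) (hφ : ContDiff ℝ (⊤ : ℕ∞) φ) (c d : ℕ) (v : ℝ × ℝ) :
    HasDerivAt (fun x => pd (c, d) φ (x, v.2)) (pd (c+1, d) φ v) v.1 := by
  have hsm : ContDiff ℝ (⊤ : ℕ∞) (fun x : ℝ => pd (c, d) φ (x, v.2)) :=
    (contDiff_pd φ hφ (c, d)).comp (contDiff_id.prodMk contDiff_const)
  have hd := (hsm.differentiable (by simp) v.1).hasDerivAt
  rwa [← pd_succ_fst c d φ v] at hd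

lemma hasDerivAt_phi_fst (φ : ℝ × ℝ → ℝ) (hφ : ContDiff ℝ (⊤ : ℕ∞) φ) (v : ℝ × ℝ) :
    HasDerivAt (fun x => φ (x, v.2)) (pd (1,0) φ v) v.1 := by
  have h := hasDerivAt_pd_fst φ hφ 0 0 v
  have he : (fun x => pd (0,0) φ (x, v.2)) = fun x => φ (x, v.2) :=
    funext fun x => pd_zero φ (x, v.2)
  rwa [he] at h

lemma hasDerivAt_iter_comp (f : ℝ → ℝ) (hf : ContDiff ℝ (⊤ : ℕ∞) f)
    (φ : ℝ × ℝ → ℝ) (hφ : ContDiff ℝ (⊤ : ℕ∞) φ) (j : ℕ) (v : ℝ × ℝ) :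
    HasDerivAt (fun x => iteratedDeriv j f (φ (x, v.2)))
      (iteratedDeriv (j+1) f (φ v) * pd (1,0) φ v) v.1 := by
  have hdf : Differentiable ℝ (iteratedDeriv j f) :=
    hf.differentiable_iteratedDeriv j (by exact_mod_cast lt_top_iff_ne_top.mpr (by simp))
  have houter := (hdf (φ v)).hasDerivAt
  rw [← iteratedDeriv_succ] at houter
  have hinner := hasDerivAt_phi_fst φ hφ v
  have hv : φ v = φ (v.1, v.2) := by simp
  rw [hv] at houter
  have := houter.comp v.1 hinner
  simpa [Function.comp_def] using this
def D (j a b : ℕ) (p : ℕ × ℕ → ℝ) : ℝ :=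
  ∑ t ∈ T j a b, C a b t * ∑ i, (∏ k ∈ univ.erase i, p (t.1 k, t.2 k)) * p (t.1 i + 1, t.2 i)

lemma comb' (m a b : ℕ) (p : ℕ × ℕ → ℝ) :
    S (m+1) (a+1) b p = ((m:ℝ)+1) * p (1,0) * S m a b p + D (m+1) a b p := by
  rw [D]; exact comb m a b p

lemma D_empty {j a b : ℕ} (h : a + b < j) (p : ℕ × ℕ → ℝ) : D j a b p = 0 := by
  rw [D, T_empty h, Finset.sum_empty]

lemma sum_step (a b : ℕ) (h1 : 1 ≤ a + b) (p : ℕ × ℕ → ℝ) (g : ℕ → ℝ) :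
    ∑ j ∈ Finset.Icc 1 (a+1+b), g j / (j.factorial : ℝ) * S j (a+1) b p
      = ∑ j ∈ Finset.Icc 1 (a+b),
          (g (j+1) * p (1,0) / (j.factorial : ℝ) * S j a b p
            + g j / (j.factorial : ℝ) * D j a b p) := by
  rw [show a+1+b = (a+b)+1 from by omega]
  rw [← Finset.Ico_add_one_right_eq_Icc, ← Finset.Ico_add_one_right_eq_Icc, Finset.sum_Ico_eq_sum_range,
    Finset.sum_Ico_eq_sum_range]
  simp only [Nat.add_sub_cancel]
  simp only [Nat.add_comm 1]
  have hterm : ∀ i : ℕ, g (i+1) / ((i+1).factorial : ℝ) * S (i+1) (a+1) b p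
      = g (i+1) * p (1,0) / ((i.factorial : ℝ)) * S i a b p
        + g (i+1) / ((i+1).factorial : ℝ) * D (i+1) a b p := by
    intro i
    rw [comb' i a b p]
    have h2 : ((i.factorial : ℝ)) ≠ 0 := Nat.cast_ne_zero.mpr (Nat.factorial_ne_zero i)
    have h3 : ((i:ℝ)+1) ≠ 0 := by positivity
    rw [Nat.factorial_succ]
    push_cast
    field_simp
  rw [Finset.sum_congr rfl fun i _ => hterm i, Finset.sum_add_distrib,
    Finset.sum_add_distrib]
  congr 1
  · rw [Finset.sum_range_succ']
    simp [S_zero_of_pos h1 p]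
  · rw [Finset.sum_range_succ]
    simp [D_empty (show a + b < a+b+1 by omega) p]
def R (f : ℝ → ℝ) (φ : ℝ × ℝ → ℝ) (a b : ℕ) (v : ℝ × ℝ) : ℝ :=
  ∑ j ∈ Finset.Icc 1 (a+b),
    iteratedDeriv j f (φ v) / (Nat.factorial j : ℝ) * S j a b (fun β => pd β φ v)

lemma step_x (f : ℝ → ℝ) (hf : ContDiff ℝ (⊤ : ℕ∞) f) (φ : ℝ × ℝ → ℝ) (hφ : ContDiff ℝ (⊤ : ℕ∞) φ)
    (a b : ℕ) (hab : 1 ≤ a + b)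
    (IH : ∀ v, pd (a, b) (fun w => f (φ w)) v = R f φ a b v) (v : ℝ × ℝ) :
    pd (a+1, b) (fun w => f (φ w)) v = R f φ (a+1) b v := by
  rw [pd_succ_fst]
  have hfun : (fun x => pd (a,b) (fun w => f (φ w)) (x, v.2))
      = fun x => R f φ a b (x, v.2) := funext fun x => IH (x, v.2)
  rw [hfun]
  have key : HasDerivAt (fun x => R f φ a b (x, v.2))
      (∑ j ∈ Finset.Icc 1 (a+b),
        (iteratedDeriv (j+1) f (φ v) * pd (1,0) φ v / (Nat.factorial j : ℝ)
            * S j a b (fun β => pd β φ v)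
          + iteratedDeriv j f (φ v) / (Nat.factorial j : ℝ)
            * D j a b (fun β => pd β φ v))) v.1 := by
    simp only [R]
    refine HasDerivAt.fun_sum fun j hj => ?_
    have h1 := (hasDerivAt_iter_comp f hf φ hφ j v).div_const (Nat.factorial j : ℝ)
    have h2 : HasDerivAt (fun x => S j a b (fun β => pd β φ (x, v.2)))
        (D j a b (fun β => pd β φ v)) v.1 := by
      simp only [S, D]
      refine HasDerivAt.fun_sum fun t ht => ?_
      refine HasDerivAt.const_mul _ ?_
      have hpr := HasDerivAt.fun_finsetProd (u := (univ : Finset (Fin j)))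
        (f := fun i x => pd (t.1 i, t.2 i) φ (x, v.2))
        (f' := fun i => pd (t.1 i + 1, t.2 i) φ v) (x := v.1)
        (fun i _ => hasDerivAt_pd_fst φ hφ (t.1 i) (t.2 i) v)
      simpa [smul_eq_mul] using hpr
    have h12 := h1.mul h2
    exact h12
  rw [key.deriv, R]
  exact (sum_step a b hab (fun β => pd β φ v) (fun j => iteratedDeriv j f (φ v))).symm
lemma S_one_one_zero (p : ℕ × ℕ → ℝ) : S 1 1 0 p = p (1, 0) := by
  rw [S, T, Finset.Nat.antidiagonalTuple_one, Finset.Nat.antidiagonalTuple_zero_right,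
    Finset.singleton_product_singleton, Finset.filter_singleton]
  rw [if_pos (by intro i; simp [Fin.eq_zero i])]
  rw [Finset.sum_singleton]
  have hC : C 1 0 ((![1], (0 : Fin 1 → ℕ)) : (Fin 1 → ℕ) × (Fin 1 → ℕ)) = 1 := by
    rw [C]
    norm_num [Fin.prod_univ_one]
  rw [hC, one_mul, Fin.prod_univ_one]
  norm_num

lemma base_case (f : ℝ → ℝ) (hf : ContDiff ℝ (⊤ : ℕ∞) f) (φ : ℝ × ℝ → ℝ) (hφ : ContDiff ℝ (⊤ : ℕ∞) φ)
    (v : ℝ × ℝ) : pd (1, 0) (fun w => f (φ w)) v = R f φ 1 0 v := by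
  rw [pd_one_zero]
  have hinner := hasDerivAt_phi_fst φ hφ v
  have houter := ((hf.differentiable (by simp)) (φ (v.1, v.2))).hasDerivAt
  have hcomp := houter.comp v.1 (by simpa using hinner)
  have hder : deriv (fun x => f (φ (x, v.2))) v.1 = deriv f (φ v) * pd (1,0) φ v := by
    have := hcomp.deriv
    simpa [Function.comp_def] using this
  rw [hder, R]
  rw [show (1 + 0 : ℕ) = 1 from rfl, Finset.Icc_self, Finset.sum_singleton,
    S_one_one_zero, iteratedDeriv_one]
  norm_num

lemma main_x0 (f : ℝ → ℝ) (hf : ContDiff ℝ (⊤ : ℕ∞) f) (φ : ℝ × ℝ → ℝ) (hφ : ContDiff ℝ (⊤ : ℕ∞) φ) :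
    ∀ a, 1 ≤ a → ∀ v, pd (a, 0) (fun w => f (φ w)) v = R f φ a 0 v := by
  intro a
  induction a with
  | zero => intro h; omega
  | succ a ih =>
    intro _ v
    rcases Nat.eq_zero_or_pos a with rfl | ha
    · exact base_case f hf φ hφ v
    · exact step_x f hf φ hφ a 0 (by omega) (ih ha) v

lemma S_swap_zero (j b : ℕ) (φ : ℝ × ℝ → ℝ) (v : ℝ × ℝ) :
    S j b 0 (fun β => pd β (fun w => φ (w.2, w.1)) (v.2, v.1))
      = S j 0 b (fun β => pd β φ v) := by
  rw [S, S]
  refine Finset.sum_nbij' (i := fun t => (t.2, t.1)) (j := fun t => (t.2, t.1)) ?_ ?_ ?_ ?_ ?_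
  · intro t ht
    obtain ⟨h1, h2, h3⟩ := mem_T.mp ht
    refine mem_T.mpr ⟨h2, h1, fun i => ?_⟩
    have := h3 i
    simp only [ne_eq, Prod.mk.injEq, not_and] at this ⊢
    omega
  · intro t ht
    obtain ⟨h1, h2, h3⟩ := mem_T.mp ht
    refine mem_T.mpr ⟨h2, h1, fun i => ?_⟩
    have := h3 i
    simp only [ne_eq, Prod.mk.injEq, not_and] at this ⊢
    omega
  · intro t ht; rfl
  · intro t ht; rfl
  · intro t ht
    obtain ⟨h1, h2, h3⟩ := mem_T.mp ht
    have ht2 : ∀ i, t.2 i = 0 := fun i =>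
      (Finset.sum_eq_zero_iff.mp h2) i (Finset.mem_univ i)
    have hC : C b 0 t = C 0 b ((t.2, t.1) : (Fin j → ℕ) × (Fin j → ℕ)) := by
      rw [C, C]
      congr 2
      · exact Nat.mul_comm _ _
      · exact Finset.prod_congr rfl fun i _ => Nat.mul_comm _ _
    have hprod : (∏ i, pd (t.1 i, t.2 i) (fun w => φ (w.2, w.1)) (v.2, v.1))
        = ∏ i, pd (t.2 i, t.1 i) φ v := by
      refine Finset.prod_congr rfl fun i _ => ?_
      rw [ht2 i]
      exact pd_swap (t.1 i) φ v
    rw [hC, hprod]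

lemma R_swap (f : ℝ → ℝ) (φ : ℝ × ℝ → ℝ) (b : ℕ) (v : ℝ × ℝ) :
    R f (fun w => φ (w.2, w.1)) b 0 (v.2, v.1) = R f φ 0 b v := by
  rw [R, R, Nat.add_zero, Nat.zero_add]
  refine Finset.sum_congr rfl fun j hj => ?_
  rw [S_swap_zero j b φ v]
lemma main_0b (f : ℝ → ℝ) (hf : ContDiff ℝ (⊤ : ℕ∞) f) (φ : ℝ × ℝ → ℝ) (hφ : ContDiff ℝ (⊤ : ℕ∞) φ)
    (b : ℕ) (hb : 1 ≤ b) (v : ℝ × ℝ) :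
    pd (0, b) (fun w => f (φ w)) v = R f φ 0 b v := by
  have hφ' : ContDiff ℝ (⊤ : ℕ∞) (fun w : ℝ × ℝ => φ (w.2, w.1)) :=
    hφ.comp (contDiff_snd.prodMk contDiff_fst)
  have H := main_x0 f hf _ hφ' b hb (v.2, v.1)
  rw [← pd_swap b (fun w => f (φ w)) v, ← R_swap f φ b v]
  exact H

lemma main_all (f : ℝ → ℝ) (hf : ContDiff ℝ (⊤ : ℕ∞) f) (φ : ℝ × ℝ → ℝ) (hφ : ContDiff ℝ (⊤ : ℕ∞) φ) :
    ∀ a b, 1 ≤ a + b → ∀ v, pd (a, b) (fun w => f (φ w)) v = R f φ a b v := by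
  intro a
  induction a with
  | zero =>
    intro b hb v
    exact main_0b f hf φ hφ b (by omega) v
  | succ a ih =>
    intro b hb v
    rcases Nat.eq_zero_or_pos (a + b) with h0 | hpos
    · have ha : a = 0 := by omega
      have hb0 : b = 0 := by omega
      subst ha; subst hb0
      exact base_case f hf φ hφ v
    · exact step_x f hf φ hφ a b hpos (fun v => ih b hpos v) v


/-- (Multi-index Faà di Bruno formula in 2D.) For `C^∞` functions
`f : ℝ → ℝ` and `φ : ℝ² → ℝ` and a multi-index `α` with `|α| ≥ 1`:
`∂^α(f∘φ) = Σ_{j=1}^{|α|} f^{(j)}(φ)/j! Σ_{α₁+⋯+α_j=α, αᵢ≠0} (α!/(α₁!⋯α_j!)) ∂^{α₁}φ⋯∂^{α_j}φ`,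
where `j`-tuples of multi-indices are encoded as pairs of `j`-tuples of naturals
(`αᵢ = (t.1 i, t.2 i)`). -/
theorem faa_di_bruno_2d (f : ℝ → ℝ) (hf : ContDiff ℝ (⊤ : ℕ∞) f)
    (φ : ℝ × ℝ → ℝ) (hφ : ContDiff ℝ (⊤ : ℕ∞) φ) (α : ℕ × ℕ) (hα : 1 ≤ α.1 + α.2)
    (v : ℝ × ℝ) :
    pd α (fun w => f (φ w)) v =
      ∑ j ∈ Finset.Icc 1 (α.1 + α.2),
        iteratedDeriv j f (φ v) / (Nat.factorial j : ℝ) *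
          ∑ t ∈ (Finset.Nat.antidiagonalTuple j α.1 ×ˢ
              Finset.Nat.antidiagonalTuple j α.2).filter
              (fun t => ∀ i, (t.1 i, t.2 i) ≠ (0, 0)),
            ((Nat.factorial α.1 * Nat.factorial α.2 : ℕ) : ℝ) /
                ((∏ i, Nat.factorial (t.1 i) * Nat.factorial (t.2 i) : ℕ) : ℝ) *
              ∏ i, pd (t.1 i, t.2 i) φ v := by
  obtain ⟨a, b⟩ := α
  have H := main_all f hf φ hφ a b hα v
  rw [H, R]
  exact Finset.sum_congr rfl fun j hj => by rw [S, T]; rfl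
end Paper
end
end

section
/- For every real s > 1 there exists a constant C₂ > 0 such that for all integers j ≥ 1 and k ≥ 0: Σ_{k₁+⋯+k_j = k} 1/((k₁+1)^s ⋯ (k_j+1)^s) ≤ C₂^{j−1}/(k+1)^s, where the sum is over all ordered j-tuples (k₁,…,k_j) of nonnegative integers summing to k. -/
/-!
With `f n = 1 / (n + 1) ^ s`: if `a + b = k` and `a ≤ b` then `k + 1 ≤ 2 (b + 1)`, so
`f a * f b ≤ 2 ^ s * f k * (f a + f b)`. Summing over `a + b = k` bounds the self-convolution
`f ⋆ f` by `C₂ * f` with `C₂ = 2 * 2 ^ s * ∑' n, f n`, finite because `s > 1`. Splitting off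
the first coordinate writes the `j`-fold convolution as `f ⋆ (j - 1)-fold`, and induction on `j`
gives the factor `C₂ ^ (j - 1)`.
-/

open Finset

theorem Finset.Nat.sum_antidiagonalTuple_succ {M : Type*} [AddCommMonoid M] (k n : ℕ)
    (F : (Fin (k + 1) → ℕ) → M) :
    ∑ t ∈ antidiagonalTuple (k + 1) n, F t =
      ∑ p ∈ antidiagonal n, ∑ t ∈ antidiagonalTuple k p.2, F (Fin.cons p.1 t) := by
  simp only [Finset.sum_eq_multiset_sum]
  change (Multiset.map F (List.Nat.antidiagonalTuple (k + 1) n : Multiset _)).sum =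
    (Multiset.map (fun p : ℕ × ℕ => (Multiset.map (fun t => F (Fin.cons p.1 t))
      (List.Nat.antidiagonalTuple k p.2 : Multiset _)).sum)
      (List.Nat.antidiagonal n : Multiset _)).sum
  simp only [Multiset.map_coe, Multiset.sum_coe, List.Nat.antidiagonalTuple, List.flatMap_def,
    List.map_flatten, List.sum_flatten, List.map_map, Function.comp_def]

section ConvolutionPowers

variable {R : Type*} [CommSemiring R] [PartialOrder R] [IsOrderedRing R] {f : ℕ → R}

theorem sum_prod_antidiagonalTuple_le_pow_mul {C : R} (hf : ∀ n, 0 ≤ f n) (hC : 0 ≤ C)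
    (hconv : ∀ n, ∑ p ∈ antidiagonal n, f p.1 * f p.2 ≤ C * f n) (m n : ℕ) :
    ∑ t ∈ Finset.Nat.antidiagonalTuple (m + 1) n, ∏ i, f (t i) ≤ C ^ m * f n := by
  induction m generalizing n with
  | zero => simp
  | succ m ih =>
    calc ∑ t ∈ Finset.Nat.antidiagonalTuple (m + 2) n, ∏ i, f (t i)
        = ∑ p ∈ antidiagonal n, f p.1 *
            ∑ t ∈ Finset.Nat.antidiagonalTuple (m + 1) p.2, ∏ i, f (t i) := by
          simp only [Finset.Nat.sum_antidiagonalTuple_succ, Fin.prod_univ_succ, Fin.cons_zero,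
            Fin.cons_succ, mul_sum]
      _ ≤ ∑ p ∈ antidiagonal n, f p.1 * (C ^ m * f p.2) :=
          sum_le_sum fun p _ => mul_le_mul_of_nonneg_left (ih p.2) (hf p.1)
      _ = C ^ m * ∑ p ∈ antidiagonal n, f p.1 * f p.2 := by
          rw [mul_sum]; exact sum_congr rfl fun p _ => by ring
      _ ≤ C ^ m * (C * f n) := mul_le_mul_of_nonneg_left (hconv n) (pow_nonneg hC m)
      _ = C ^ (m + 1) * f n := by ring

theorem mul_le_mul_add_of_doubling {D : R} (hf : ∀ n, 0 ≤ f n)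
    (hD : ∀ a b, a ≤ b → f b ≤ D * f (a + b)) (a b : ℕ) :
    f a * f b ≤ D * f (a + b) * (f a + f b) := by
  have hDn : 0 ≤ D * f (a + b) := by simpa using (hf _).trans (hD 0 (a + b) (Nat.zero_le _))
  rcases le_total a b with hab | hba
  · calc f a * f b ≤ f a * (D * f (a + b)) := mul_le_mul_of_nonneg_left (hD a b hab) (hf a)
      _ ≤ D * f (a + b) * (f a + f b) := by
        rw [mul_comm]; exact mul_le_mul_of_nonneg_left (le_add_of_nonneg_right (hf b)) hDn
  · calc f a * f b ≤ D * f (a + b) * f b := by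
          rw [add_comm a]; exact mul_le_mul_of_nonneg_right (hD b a hba) (hf b)
      _ ≤ D * f (a + b) * (f a + f b) :=
          mul_le_mul_of_nonneg_left (le_add_of_nonneg_left (hf a)) hDn

theorem sum_antidiagonal_mul_le_of_doubling {D S : R} (hf : ∀ n, 0 ≤ f n)
    (hD : ∀ a b, a ≤ b → f b ≤ D * f (a + b)) (hS : ∀ n, ∑ i ∈ range n, f i ≤ S) (n : ℕ) :
    ∑ p ∈ antidiagonal n, f p.1 * f p.2 ≤ 2 * D * S * f n := by
  have hfst : ∑ p ∈ antidiagonal n, f p.1 ≤ S := by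
    rw [Finset.Nat.sum_antidiagonal_eq_sum_range_succ_mk]; exact hS _
  have hsnd : ∑ p ∈ antidiagonal n, f p.2 ≤ S := by
    rw [← Finset.Nat.sum_antidiagonal_swap]; exact hfst
  have hDn : 0 ≤ D * f n := by simpa using (hf n).trans (hD 0 n (Nat.zero_le _))
  calc ∑ p ∈ antidiagonal n, f p.1 * f p.2
      ≤ ∑ p ∈ antidiagonal n, D * f n * (f p.1 + f p.2) := sum_le_sum fun p hp => by
        rw [← Finset.HasAntidiagonal.mem_antidiagonal.mp hp]; exact mul_le_mul_add_of_doubling hf hD p.1 p.2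
    _ = D * f n * (∑ p ∈ antidiagonal n, f p.1 + ∑ p ∈ antidiagonal n, f p.2) := by
        rw [← sum_add_distrib, mul_sum]
    _ ≤ D * f n * (S + S) := mul_le_mul_of_nonneg_left (add_le_add hfst hsnd) hDn
    _ = 2 * D * S * f n := by ring

end ConvolutionPowers

section PowerSequence

variable {s : ℝ}

theorem summable_one_div_natCast_add_one_rpow (hs : 1 < s) :
    Summable fun n : ℕ => 1 / ((n : ℝ) + 1) ^ s := by
  simpa [abs_of_pos, Nat.cast_add_one_pos] using (Real.summable_one_div_nat_add_rpow 1 s).2 hs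

theorem one_div_natCast_add_one_rpow_le (hs : 0 ≤ s) {a b : ℕ} (hab : a ≤ b) :
    1 / ((b : ℝ) + 1) ^ s ≤ 2 ^ s * (1 / (((a + b : ℕ) : ℝ) + 1) ^ s) := by
  have hdoubling : ((a + b : ℕ) : ℝ) + 1 ≤ 2 * ((b : ℝ) + 1) := by
    push_cast; linarith [(Nat.cast_le (α := ℝ)).2 hab]
  rw [mul_one_div, div_le_div_iff₀ (by positivity) (by positivity), one_mul,
    ← Real.mul_rpow zero_le_two (by positivity)]
  exact Real.rpow_le_rpow (by positivity) hdoubling hs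

end PowerSequence

namespace Paper

/-- (Convolution estimate.) For every real `s > 1` there is `C₂ > 0`
such that for all integers `j ≥ 1` and `k ≥ 0`:
`Σ_{k₁+⋯+k_j=k} 1/((k₁+1)^s ⋯ (k_j+1)^s) ≤ C₂^{j-1}/(k+1)^s`. -/
theorem convolution_power_estimate (s : ℝ) (hs : 1 < s) :
    ∃ C₂ : ℝ, 0 < C₂ ∧ ∀ j k : ℕ, 1 ≤ j →
      ∑ t ∈ Finset.Nat.antidiagonalTuple j k,
          ∏ i, (1 : ℝ) / ((t i : ℝ) + 1) ^ s ≤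
        C₂ ^ (j - 1) / ((k : ℝ) + 1) ^ s := by
  set f : ℕ → ℝ := fun n => 1 / ((n : ℝ) + 1) ^ s
  have hf : ∀ n, 0 ≤ f n := fun n => by positivity
  have hsum : Summable f := summable_one_div_natCast_add_one_rpow hs
  have hS : 0 < ∑' n, f n := hsum.tsum_pos hf 0 (by positivity)
  refine ⟨2 * 2 ^ s * ∑' n, f n, by positivity, fun j k hj => ?_⟩
  obtain ⟨m, rfl⟩ := Nat.exists_eq_add_of_le' hj
  have hconv := sum_antidiagonal_mul_le_of_doubling hf
    (fun a b hab => one_div_natCast_add_one_rpow_le (by linarith) hab)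
    (fun n => hsum.sum_le_tsum _ fun i _ => hf i)
  simpa only [f, Nat.add_sub_cancel, mul_one_div] using
    sum_prod_antidiagonalTuple_le_pow_mul hf (by positivity) hconv m k

end Paper
end
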